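/- Second logarithmic derivative of tau for SL vessel parameters: for the Sturm–Liouville vessel parameters σ₁ = [[0,1],[1,0]], σ₂ = [[1,0],[0,0]], γ = [[0,0],[0,i]], writing H₀(x) = B(x)* X(x)⁻¹ B(x) = [[a, b],[b*, d]] (a 2×2 matrix with entries a, b, b*, d), the tau function of the vessel satisfies τ′/τ = a and τ″/τ = i(b* − b). In particular the terms involving the operator A cancel in the computation of (τ′/τ)′. -/

import Mathlib

/-!
Jacobi's formula gives `τ′/τ = tr (X⁻¹ X′) = tr (X⁻¹ B σ₂ Bᴴ) = (Bᴴ X⁻¹ B)₀₀ = a`.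
Differentiating `a = (Bᴴ X⁻¹ B)₀₀` with `(X⁻¹)′ = -X⁻¹ X′ X⁻¹` gives
`a′ = (B′ᴴ X⁻¹ B + Bᴴ X⁻¹ B′)₀₀ - a²`, in which only the first column of `B′` enters.
Since `B′ = (-A B σ₂ - B γ) σ₁` and `σ₂ σ₁` has zero first column, the operator `A` drops out:
`B′ e₀ = -i B e₁`. Hence `a′ = i (b* - b) - a²` and `τ″/τ = a′ + a² = i (b* - b)`.
-/

open Matrix

attribute [local instance] Matrix.normedAddCommGroup Matrix.normedSpace

section MatrixCalculus

variable {𝕜 𝕂 : Type*} [NontriviallyNormedField 𝕜] [NontriviallyNormedField 𝕂]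
  [NormedAlgebra 𝕜 𝕂] {x : 𝕜}

theorem Matrix.hasDerivAt_iff {m n : Type*} [Fintype m] [Fintype n]
    {f : 𝕜 → Matrix m n 𝕂} {f' : Matrix m n 𝕂} :
    HasDerivAt f f' x ↔ ∀ i j, HasDerivAt (fun t => f t i j) (f' i j) x :=
  hasDerivAt_pi.trans <| forall_congr' fun _ => hasDerivAt_pi

theorem HasDerivAt.matrix_mul {l m n : Type*} [Fintype l] [Fintype m] [Fintype n]
    {f : 𝕜 → Matrix l m 𝕂} {g : 𝕜 → Matrix m n 𝕂} {f' : Matrix l m 𝕂} {g' : Matrix m n 𝕂}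
    (hf : HasDerivAt f f' x) (hg : HasDerivAt g g' x) :
    HasDerivAt (fun t => f t * g t) (f' * g x + f x * g') x := by
  rw [Matrix.hasDerivAt_iff] at hf hg ⊢
  intro i j
  simp only [Matrix.add_apply, Matrix.mul_apply, ← Finset.sum_add_distrib]
  exact HasDerivAt.fun_sum fun k _ => (hf i k).mul (hg k j)

theorem HasDerivAt.of_matrix_mul_involutive {m n : Type*} [Fintype m] [Fintype n]
    [DecidableEq n] {f : 𝕜 → Matrix m n 𝕂} {σ : Matrix n n 𝕂} {f' : Matrix m n 𝕂}
    (hσ : σ * σ = 1) (h : HasDerivAt (fun t => f t * σ) f' x) :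
    HasDerivAt f (f' * σ) x := by
  simpa [Matrix.mul_assoc, hσ] using h.matrix_mul (hasDerivAt_const x σ)

theorem HasDerivAt.matrix_conjTranspose {m n : Type*} [Fintype m] [Fintype n]
    [StarRing 𝕜] [TrivialStar 𝕜] [StarRing 𝕂] [StarModule 𝕜 𝕂] [ContinuousStar 𝕂]
    {f : 𝕜 → Matrix m n 𝕂} {f' : Matrix m n 𝕂} (hf : HasDerivAt f f' x) :
    HasDerivAt (fun t => (f t)ᴴ) f'ᴴ x := by
  rw [Matrix.hasDerivAt_iff] at hf ⊢
  exact fun i j => (hf j i).star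

variable {n : Type*} [Fintype n] [DecidableEq n] {X : 𝕜 → Matrix n n 𝕂} {X' : Matrix n n 𝕂}

variable (𝕜) in
noncomputable def Matrix.detContinuousMultilinearMap :
    ContinuousMultilinearMap 𝕜 (fun _ : n => n → 𝕂) 𝕂 where
  toMultilinearMap := (Matrix.detRowAlternating (R := 𝕂)).toMultilinearMap.restrictScalars 𝕜
  cont := continuous_id.matrix_det

theorem HasDerivAt.matrix_det (h : HasDerivAt X X' x) :
    HasDerivAt (fun t => (X t).det) (∑ i, ((X x).updateRow i (X' i)).det) x := by
  have hrows : ∀ i, HasFDerivAt (fun t => X t i) ((1 : 𝕜 →L[𝕜] 𝕜).smulRight (X' i)) x :=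
    fun i => (hasDerivAt_pi.1 h i).hasFDerivAt
  refine (HasFDerivAt.multilinear_comp (detContinuousMultilinearMap 𝕜) hrows).hasDerivAt.congr_deriv ?_
  simp only [_root_.sum_apply, ContinuousLinearMap.comp_apply, ContinuousLinearMap.smulRight_apply,
    one_apply_eq_self, one_smul, ContinuousMultilinearMap.toContinuousLinearMap_apply]
  rfl

theorem Matrix.sum_det_updateRow_eq_trace (A M : Matrix n n 𝕂) :
    ∑ i, (A.updateRow i (M i)).det = (A.adjugate * M).trace := by
  simp only [← cramer_transpose_apply, cramer_eq_adjugate_mulVec, ← adjugate_transpose,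
    mulVec, dotProduct, transpose_apply, trace, diag_apply, mul_apply]
  exact Finset.sum_comm

theorem Matrix.trace_adjugate_mul_of_isUnit {A : Matrix n n 𝕂} (hA : IsUnit A)
    (M : Matrix n n 𝕂) : (A.adjugate * M).trace = A.det * (A⁻¹ * M).trace := by
  rw [inv_def, Ring.inverse_eq_inv', smul_mul, trace_smul, smul_eq_mul, mul_inv_cancel_left₀]
  exact ((isUnit_iff_isUnit_det A).1 hA).ne_zero

theorem HasDerivAt.matrix_det_of_isUnit (h : HasDerivAt X X' x) (hx : IsUnit (X x)) :
    HasDerivAt (fun t => (X t).det) ((X x).det * ((X x)⁻¹ * X').trace) x := by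
  simpa only [sum_det_updateRow_eq_trace, trace_adjugate_mul_of_isUnit hx] using h.matrix_det

theorem HasDerivAt.matrix_updateRow (h : HasDerivAt X X' x) (j : n) (v : n → 𝕂) :
    HasDerivAt (fun t => (X t).updateRow j v) (X'.updateRow j 0) x := by
  rw [Matrix.hasDerivAt_iff] at h ⊢
  intro a b
  simp only [updateRow_apply]
  split_ifs
  · exact hasDerivAt_const x _
  · exact h a b

theorem HasDerivAt.differentiableAt_matrix_adjugate (h : HasDerivAt X X' x) :
    DifferentiableAt 𝕜 (fun t => (X t).adjugate) x :=
  differentiableAt_pi.2 fun i => differentiableAt_pi.2 fun j => by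
    simp only [adjugate_apply]
    exact (h.matrix_updateRow j (Pi.single i 1)).matrix_det.differentiableAt

theorem HasDerivAt.matrix_inv (h : HasDerivAt X X' x) (hx : IsUnit (X x)) :
    HasDerivAt (fun t => (X t)⁻¹) (-((X x)⁻¹ * X' * (X x)⁻¹)) x := by
  have hdet : IsUnit (X x).det := (isUnit_iff_isUnit_det _).1 hx
  -- Cramer's rule `X⁻¹ = det⁻¹ • adj X` gives differentiability; `X⁻¹ X = 1` near `x` then
  -- pins down the derivative.
  have hdiff : DifferentiableAt 𝕜 (fun t => (X t)⁻¹) x := by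
    simp only [inv_def, Ring.inverse_eq_inv']
    exact (h.matrix_det.differentiableAt.inv hdet.ne_zero).smul
      h.differentiableAt_matrix_adjugate
  obtain ⟨E, hE⟩ : ∃ E, HasDerivAt (fun t => (X t)⁻¹) E x := ⟨_, hdiff.hasDerivAt⟩
  have hinv_mul : (fun t => (X t)⁻¹ * X t) =ᶠ[nhds x] fun _ => 1 := by
    filter_upwards [h.matrix_det.continuousAt.eventually_ne hdet.ne_zero] with t ht
    exact nonsing_inv_mul _ (Ne.isUnit ht)
  have hE_mul : E * X x = -((X x)⁻¹ * X') := by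
    rw [eq_neg_iff_add_eq_zero]
    exact ((hE.matrix_mul h).congr_of_eventuallyEq hinv_mul.symm).unique (hasDerivAt_const x 1)
  convert hE using 1
  calc -((X x)⁻¹ * X' * (X x)⁻¹) = E * X x * (X x)⁻¹ := by rw [hE_mul, neg_mul]
    _ = E := by rw [Matrix.mul_assoc, mul_nonsing_inv _ hdet, Matrix.mul_one]

theorem HasDerivAt.conjTranspose_mul_inv_mul {m : Type*} [Fintype m]
    [StarRing 𝕜] [TrivialStar 𝕜] [StarRing 𝕂] [StarModule 𝕜 𝕂] [ContinuousStar 𝕂]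
    {B : 𝕜 → Matrix n m 𝕂} {B' : Matrix n m 𝕂} (hB : HasDerivAt B B' x)
    (hX : HasDerivAt X X' x) (hx : IsUnit (X x)) :
    HasDerivAt (fun t => (B t)ᴴ * (X t)⁻¹ * B t)
      (B'ᴴ * (X x)⁻¹ * B x - (B x)ᴴ * (X x)⁻¹ * X' * (X x)⁻¹ * B x + (B x)ᴴ * (X x)⁻¹ * B') x :=
  (((hB.matrix_conjTranspose).matrix_mul (hX.matrix_inv hx)).matrix_mul hB).congr_deriv <| by
    simp only [Matrix.mul_neg, Matrix.neg_mul, Matrix.add_mul, Matrix.mul_assoc]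
    abel

end MatrixCalculus

namespace SLVessel

open Complex

variable {m : Type*} [Fintype m]

theorem trace_inv_mul_derivX (K : Matrix m m ℂ) (B : Matrix m (Fin 2) ℂ) :
    (K * (B * !![(1 : ℂ), 0; 0, 0] * Bᴴ)).trace = (Bᴴ * K * B) 0 0 := by
  rw [← Matrix.mul_assoc, trace_mul_comm, Matrix.mul_assoc]
  simp [trace, mul_apply, Fin.sum_univ_two]

theorem derivB_apply_zero (A : Matrix m m ℂ) (B : Matrix m (Fin 2) ℂ) (k : m) :
    ((-(A * B * !![(1 : ℂ), 0; 0, 0]) - B * !![(0 : ℂ), 0; 0, I]) * !![(0 : ℂ), 1; 1, 0]) k 0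
      = -I * B k 1 := by
  simp [mul_apply, Fin.sum_univ_two, mul_comm]

theorem derivH_apply_zero_zero (K : Matrix m m ℂ) (B B' : Matrix m (Fin 2) ℂ)
    (hB' : ∀ k, B' k 0 = -I * B k 1) :
    (B'ᴴ * K * B - Bᴴ * K * (B * !![(1 : ℂ), 0; 0, 0] * Bᴴ) * K * B + Bᴴ * K * B') 0 0
      = I * ((Bᴴ * K * B) 1 0 - (Bᴴ * K * B) 0 1) - (Bᴴ * K * B) 0 0 ^ 2 := by
  have hleft : (B'ᴴ * K * B) 0 0 = I * (Bᴴ * K * B) 1 0 := by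
    simp [mul_apply, hB', Finset.mul_sum, Finset.sum_mul, mul_assoc]
  have hright : (Bᴴ * K * B') 0 0 = -I * (Bᴴ * K * B) 0 1 := by
    simp [mul_apply, hB', Finset.mul_sum, mul_left_comm]
  have hmiddle : (Bᴴ * K * (B * !![(1 : ℂ), 0; 0, 0] * Bᴴ) * K * B) 0 0
      = (Bᴴ * K * B) 0 0 ^ 2 := by
    rw [show Bᴴ * K * (B * !![(1 : ℂ), 0; 0, 0] * Bᴴ) * K * B
        = Bᴴ * K * B * !![(1 : ℂ), 0; 0, 0] * (Bᴴ * K * B) by simp only [Matrix.mul_assoc]]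
    simp [mul_apply, Fin.sum_univ_two, sq]
  rw [Matrix.add_apply, Matrix.sub_apply, hleft, hright, hmiddle]
  ring

end SLVessel

theorem stmt6_general {n : ℕ}
    (σ₁ σ₂ γ : Matrix (Fin 2) (Fin 2) ℂ)
    (hσ₁ : σ₁ = !![0, 1; 1, 0]) (hσ₂ : σ₂ = !![1, 0; 0, 0])
    (hγ : γ = !![0, 0; 0, Complex.I])
    (A : Matrix (Fin n) (Fin n) ℂ)
    (B : ℝ → Matrix (Fin n) (Fin 2) ℂ) (X : ℝ → Matrix (Fin n) (Fin n) ℂ)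
    (hB : ∀ x : ℝ, HasDerivAt (fun y => B y * σ₁) (-(A * B x * σ₂) - B x * γ) x)
    (hX : ∀ x : ℝ, HasDerivAt X (B x * σ₂ * (B x)ᴴ) x)
    (hXinv : ∀ x : ℝ, IsUnit (X x))
    (x₀ : ℝ)
    (τ : ℝ → ℂ) (hτ : ∀ x : ℝ, τ x = ((X x₀)⁻¹ * X x).det)
    (H₀ : ℝ → Matrix (Fin 2) (Fin 2) ℂ)
    (hH₀ : ∀ x : ℝ, H₀ x = (B x)ᴴ * (X x)⁻¹ * B x) :
    ∀ x : ℝ, HasDerivAt τ (τ x * H₀ x 0 0) x ∧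
      HasDerivAt (deriv τ) (Complex.I * (H₀ x 1 0 - H₀ x 0 1) * τ x) x := by
  subst hσ₁ hσ₂ hγ
  have hτ' : ∀ t, HasDerivAt τ (τ t * H₀ t 0 0) t := by
    intro t
    have hτ_eq : (fun s => ((X x₀)⁻¹).det * (X s).det) = τ := funext fun s => by
      rw [hτ, det_mul]
    have hdet := ((hX t).matrix_det_of_isUnit (hXinv t)).const_mul ((X x₀)⁻¹).det
    rw [hτ_eq, SLVessel.trace_inv_mul_derivX, ← hH₀, ← mul_assoc, ← det_mul, ← hτ] at hdet
    exact hdet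
  intro x
  refine ⟨hτ' x, ?_⟩
  have hB' := (hB x).of_matrix_mul_involutive (by simp [Matrix.one_fin_two])
  have ha := Matrix.hasDerivAt_iff.1 (hB'.conjTranspose_mul_inv_mul (hX x) (hXinv x)) 0 0
  rw [SLVessel.derivH_apply_zero_zero _ _ _ (SLVessel.derivB_apply_zero A (B x))] at ha
  simp only [← hH₀] at ha
  rw [show deriv τ = fun t => τ t * H₀ t 0 0 from funext fun t => (hτ' t).deriv]
  exact ((hτ' x).mul ha).congr_deriv (by ring)

/-- For the Sturm–Liouville vessel parameters, with `H₀ = Bᴴ X⁻¹ B = [[a,b],[b*,d]]`,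
the tau function satisfies `τ′/τ = a` and `τ″/τ = i (b* − b)`. -/
theorem stmt6 {n : ℕ}
    (σ₁ σ₂ γ : Matrix (Fin 2) (Fin 2) ℂ)
    (hσ₁ : σ₁ = !![0, 1; 1, 0]) (hσ₂ : σ₂ = !![1, 0; 0, 0])
    (hγ : γ = !![0, 0; 0, Complex.I])
    (A : Matrix (Fin n) (Fin n) ℂ)
    (B : ℝ → Matrix (Fin n) (Fin 2) ℂ) (X : ℝ → Matrix (Fin n) (Fin n) ℂ)
    (hB : ∀ x : ℝ, HasDerivAt (fun y => B y * σ₁) (-(A * B x * σ₂) - B x * γ) x)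
    (hX : ∀ x : ℝ, HasDerivAt X (B x * σ₂ * (B x)ᴴ) x)
    (hLyap : ∀ x : ℝ, A * X x + X x * Aᴴ + B x * σ₁ * (B x)ᴴ = 0)
    (hXh : ∀ x : ℝ, (X x).IsHermitian) (hXinv : ∀ x : ℝ, IsUnit (X x))
    (x₀ : ℝ)
    (τ : ℝ → ℂ) (hτ : ∀ x : ℝ, τ x = ((X x₀)⁻¹ * X x).det)
    (H₀ : ℝ → Matrix (Fin 2) (Fin 2) ℂ)
    (hH₀ : ∀ x : ℝ, H₀ x = (B x)ᴴ * (X x)⁻¹ * B x) :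
    ∀ x : ℝ, HasDerivAt τ (τ x * H₀ x 0 0) x ∧
      HasDerivAt (deriv τ) (Complex.I * (H₀ x 1 0 - H₀ x 0 1) * τ x) x :=
  stmt6_general σ₁ σ₂ γ hσ₁ hσ₂ hγ A B X hB hX hXinv x₀ τ hτ H₀ hH₀
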